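/- Let n, m₁, m₂ ∈ ℕ, δ > 0, M > 0, and fix matrices C ∈ ℝ^{n×n}, B₁, D₁ ∈ ℝ^{n×m₁}, B₂, D₂ ∈ ℝ^{n×m₂}, R₁ ∈ Sym_{m₁}(ℝ), R₂ ∈ Sym_{m₂}(ℝ) with R₁ ⪰ δI and R₂ ⪰ δI. Then there exists a constant C₀ > 0, depending only on δ, M, and the norms of the fixed matrices, such that for all symmetric positive semidefinite P₁, P₂, P₁', P₂' ∈ ℝ^{n×n} with norms at most M, one has ‖Θ̄₁(P₁,P₂) − Θ̄₁(P₁',P₂')‖ ≤ C₀(‖P₁ − P₁'‖ + ‖P₂ − P₂'‖). -/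

import Mathlib

open Matrix

noncomputable section

open scoped NNReal

attribute [local instance] Matrix.frobeniusSeminormedAddCommGroup
  Matrix.frobeniusNormedAddCommGroup

/-- The Frobenius norm of a real matrix. -/
def fnorm {a b : ℕ} (M : Matrix (Fin a) (Fin b) ℝ) : ℝ :=
  Real.sqrt (∑ i, ∑ j, (M i j) ^ 2)

/-- `𝐁(P₂) = B₁ − B₂(R₂+D₂ᵀP₂D₂)⁻¹D₂ᵀP₂D₁`. -/
def Bbold {n m1 m2 : ℕ} (B1 D1 : Matrix (Fin n) (Fin m1) ℝ)
    (B2 D2 : Matrix (Fin n) (Fin m2) ℝ) (R2 : Matrix (Fin m2) (Fin m2) ℝ)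
    (P2 : Matrix (Fin n) (Fin n) ℝ) : Matrix (Fin n) (Fin m1) ℝ :=
  B1 - B2 * (R2 + D2ᵀ * P2 * D2)⁻¹ * D2ᵀ * P2 * D1

/-- `𝐃(P₂) = D₁ − D₂(R₂+D₂ᵀP₂D₂)⁻¹D₂ᵀP₂D₁`. -/
def Dbold {n m1 m2 : ℕ} (D1 : Matrix (Fin n) (Fin m1) ℝ)
    (D2 : Matrix (Fin n) (Fin m2) ℝ) (R2 : Matrix (Fin m2) (Fin m2) ℝ)
    (P2 : Matrix (Fin n) (Fin n) ℝ) : Matrix (Fin n) (Fin m1) ℝ :=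
  D1 - D2 * (R2 + D2ᵀ * P2 * D2)⁻¹ * D2ᵀ * P2 * D1

/-- `K(P₂) = (R₂+D₂ᵀP₂D₂)⁻¹(B₂ᵀP₂+D₂ᵀP₂C)`. -/
def Kmat {n m2 : ℕ} (C : Matrix (Fin n) (Fin n) ℝ) (B2 D2 : Matrix (Fin n) (Fin m2) ℝ)
    (R2 : Matrix (Fin m2) (Fin m2) ℝ) (P2 : Matrix (Fin n) (Fin n) ℝ) :
    Matrix (Fin m2) (Fin n) ℝ :=
  (R2 + D2ᵀ * P2 * D2)⁻¹ * (B2ᵀ * P2 + D2ᵀ * P2 * C)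

/-- `Θ̄₁(P₁,P₂) = −(R₁+𝐃ᵀP₁𝐃)⁻¹(𝐁ᵀP₁ + 𝐃ᵀP₁(C−D₂K))`. -/
def Theta1 {n m1 m2 : ℕ} (C : Matrix (Fin n) (Fin n) ℝ)
    (B1 D1 : Matrix (Fin n) (Fin m1) ℝ) (B2 D2 : Matrix (Fin n) (Fin m2) ℝ)
    (R1 : Matrix (Fin m1) (Fin m1) ℝ) (R2 : Matrix (Fin m2) (Fin m2) ℝ)
    (P1 P2 : Matrix (Fin n) (Fin n) ℝ) : Matrix (Fin m1) (Fin n) ℝ :=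
  -((R1 + (Dbold D1 D2 R2 P2)ᵀ * P1 * Dbold D1 D2 R2 P2)⁻¹ *
      ((Bbold B1 D1 B2 D2 R2 P2)ᵀ * P1
        + (Dbold D1 D2 R2 P2)ᵀ * P1 * (C - D2 * Kmat C B2 D2 R2 P2)))

lemma fnorm_eq {a b : ℕ} (A : Matrix (Fin a) (Fin b) ℝ) : fnorm A = ‖A‖ := by
  rw [fnorm, Matrix.frobenius_norm_def, ← Real.sqrt_eq_rpow]
  congr 1
  refine Finset.sum_congr rfl fun i _ => Finset.sum_congr rfl fun j _ => ?_
  rw [Real.rpow_two, Real.norm_eq_abs, sq_abs]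

lemma fnorm_eq_nnnorm {a b : ℕ} (A : Matrix (Fin a) (Fin b) ℝ) : fnorm A = (‖A‖₊ : ℝ) := by
  rw [fnorm_eq, coe_nnnorm]

/-- key inverse facts -/
lemma inv_facts {k : ℕ} {δ : ℝ} (hδ : 0 < δ) {A : Matrix (Fin k) (Fin k) ℝ}
    (h : (A - δ • 1).PosSemidef) :
    A * A⁻¹ = 1 ∧ A⁻¹ * A = 1 ∧ ‖A⁻¹‖₊ ≤ Real.toNNReal (Real.sqrt k / δ) := by
  have h1 : (δ • (1 : Matrix (Fin k) (Fin k) ℝ)).PosDef := by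
    rw [smul_one_eq_diagonal]
    exact Matrix.PosDef.diagonal fun _ => hδ
  have hA : A.PosDef := by
    have := Matrix.PosDef.posSemidef_add h h1
    simpa using this
  have hdet : IsUnit A.det := hA.det_pos.ne'.isUnit
  refine ⟨Matrix.mul_nonsing_inv A hdet, Matrix.nonsing_inv_mul A hdet, ?_⟩
  rw [Real.le_toNNReal_iff_coe_le (by positivity), coe_nnnorm, ← fnorm_eq, fnorm]
  have hcol : ∀ j, ∑ i, (A⁻¹ i j) ^ 2 ≤ (δ ^ 2)⁻¹ := by
    intro j
    set y : Fin k → ℝ := fun i => A⁻¹ i j with hy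
    have hmv : ∀ i, (A *ᵥ y) i = (1 : Matrix (Fin k) (Fin k) ℝ) i j := by
      intro i
      rw [← Matrix.mul_nonsing_inv A hdet]
      simp [Matrix.mulVec, Matrix.mul_apply, dotProduct, hy]
    have hdot : y ⬝ᵥ (A *ᵥ y) = y j := by
      unfold dotProduct
      simp only [hmv, Matrix.one_apply, mul_ite, mul_one, mul_zero]
      simp
    have hpsd := h.dotProduct_mulVec_nonneg y
    rw [star_trivial, Matrix.sub_mulVec, Matrix.smul_mulVec, Matrix.one_mulVec,
      dotProduct_sub, hdot, dotProduct_smul] at hpsd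
    set t : ℝ := y ⬝ᵥ y with ht
    have ht1 : t = ∑ i, (y i) ^ 2 := by
      rw [ht]; unfold dotProduct; exact Finset.sum_congr rfl fun i _ => (sq (y i)).symm
    have ht0 : 0 ≤ t := by rw [ht1]; positivity
    have hjt : (y j) ^ 2 ≤ t := by
      rw [ht1]
      exact Finset.single_le_sum (fun i _ => sq_nonneg (y i)) (Finset.mem_univ j)
    have hlow : δ * t ≤ y j := by
      have : δ • t = δ * t := rfl
      linarith [hpsd, this ▸ hpsd]
    have key : δ ^ 2 * t ^ 2 ≤ t := by
      have h2 : (δ * t) ^ 2 ≤ (y j) ^ 2 := by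
        apply sq_le_sq' _ hlow
        nlinarith [mul_nonneg hδ.le ht0]
      calc δ ^ 2 * t ^ 2 = (δ * t) ^ 2 := by ring
        _ ≤ (y j) ^ 2 := h2
        _ ≤ t := hjt
    have : ∑ i, (y i) ^ 2 ≤ (δ ^ 2)⁻¹ := by
      rw [← ht1, inv_eq_one_div, le_div_iff₀ (by positivity)]
      rcases ht0.eq_or_lt with h0 | h0
      · rw [← h0]; norm_num
      · nlinarith [key, h0]
    simpa [hy] using this
  have hsum : ∑ i, ∑ j, (A⁻¹ i j) ^ 2 ≤ (k : ℝ) * (δ ^ 2)⁻¹ := by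
    rw [Finset.sum_comm]
    calc ∑ j, ∑ i, (A⁻¹ i j) ^ 2 ≤ ∑ _j : Fin k, (δ ^ 2)⁻¹ :=
          Finset.sum_le_sum fun j _ => hcol j
      _ = (k : ℝ) * (δ ^ 2)⁻¹ := by simp [mul_comm]
  calc Real.sqrt (∑ i, ∑ j, (A⁻¹ i j) ^ 2) ≤ Real.sqrt ((k : ℝ) * (δ ^ 2)⁻¹) :=
        Real.sqrt_le_sqrt hsum
    _ = Real.sqrt k / δ := by
        rw [Real.sqrt_mul (by positivity), Real.sqrt_inv, Real.sqrt_sq hδ.le, div_eq_mul_inv]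

/- norm product helpers -/
lemma duo {a b c : ℕ} {A : Matrix (Fin a) (Fin b) ℝ} {B : Matrix (Fin b) (Fin c) ℝ}
    {x y : ℝ≥0} (hA : ‖A‖₊ ≤ x) (hB : ‖B‖₊ ≤ y) : ‖A * B‖₊ ≤ x * y :=
  le_trans (Matrix.frobenius_nnnorm_mul A B) (mul_le_mul' hA hB)

lemma tri {a b c d : ℕ} {A : Matrix (Fin a) (Fin b) ℝ} {B : Matrix (Fin b) (Fin c) ℝ}
    {C : Matrix (Fin c) (Fin d) ℝ} {x y z : ℝ≥0}
    (hA : ‖A‖₊ ≤ x) (hB : ‖B‖₊ ≤ y) (hC : ‖C‖₊ ≤ z) : ‖A * B * C‖₊ ≤ x * y * z :=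
  duo (duo hA hB) hC

lemma quad {a b c d f : ℕ} {A : Matrix (Fin a) (Fin b) ℝ} {B : Matrix (Fin b) (Fin c) ℝ}
    {C : Matrix (Fin c) (Fin d) ℝ} {D : Matrix (Fin d) (Fin f) ℝ} {x y z w : ℝ≥0}
    (hA : ‖A‖₊ ≤ x) (hB : ‖B‖₊ ≤ y) (hC : ‖C‖₊ ≤ z) (hD : ‖D‖₊ ≤ w) :
    ‖A * B * C * D‖₊ ≤ x * y * z * w :=
  duo (tri hA hB hC) hD

lemma quint {a b c d f g : ℕ} {A : Matrix (Fin a) (Fin b) ℝ} {B : Matrix (Fin b) (Fin c) ℝ}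
    {C : Matrix (Fin c) (Fin d) ℝ} {D : Matrix (Fin d) (Fin f) ℝ} {E : Matrix (Fin f) (Fin g) ℝ}
    {x y z w v : ℝ≥0}
    (hA : ‖A‖₊ ≤ x) (hB : ‖B‖₊ ≤ y) (hC : ‖C‖₊ ≤ z) (hD : ‖D‖₊ ≤ w) (hE : ‖E‖₊ ≤ v) :
    ‖A * B * C * D * E‖₊ ≤ x * y * z * w * v :=
  duo (quad hA hB hC hD) hE

/- κ-calculus on ℝ≥0 -/
lemma pbump {κ x : ℝ≥0} {a b : ℕ} (hκ : 1 ≤ κ) (h : x ≤ κ ^ a) (hab : a ≤ b) : x ≤ κ ^ b :=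
  h.trans (pow_le_pow_right₀ hκ hab)

lemma pmul {κ x y : ℝ≥0} {a b : ℕ} (hx : x ≤ κ ^ a) (hy : y ≤ κ ^ b) :
    x * y ≤ κ ^ (a + b) := by
  rw [pow_add]; exact mul_le_mul' hx hy

lemma padd {κ x y : ℝ≥0} {a : ℕ} (hκ : 2 ≤ κ) (hx : x ≤ κ ^ a) (hy : y ≤ κ ^ a) :
    x + y ≤ κ ^ (a + 1) := by
  calc x + y ≤ κ ^ a + κ ^ a := add_le_add hx hy
    _ = 2 * κ ^ a := (two_mul _).symm
    _ ≤ κ * κ ^ a := mul_le_mul_left hκ _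
    _ = κ ^ (a + 1) := (pow_succ' κ a).symm

lemma pbumpe {κ x e : ℝ≥0} {a b : ℕ} (hκ : 1 ≤ κ) (h : x ≤ κ ^ a * e) (hab : a ≤ b) :
    x ≤ κ ^ b * e :=
  h.trans (mul_le_mul_left (pow_le_pow_right₀ hκ hab) e)

lemma padde {κ x y e : ℝ≥0} {a : ℕ} (hκ : 2 ≤ κ) (hx : x ≤ κ ^ a * e) (hy : y ≤ κ ^ a * e) :
    x + y ≤ κ ^ (a + 1) * e := by
  calc x + y ≤ κ ^ a * e + κ ^ a * e := add_le_add hx hy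
    _ = (κ ^ a + κ ^ a) * e := by ring
    _ ≤ κ ^ (a + 1) * e := mul_le_mul_left (padd hκ le_rfl le_rfl) e

/-- Local Lipschitz estimate for the leader's equilibrium gain map `Θ̄₁` on the set
of pairs of positive semidefinite matrices with norms at most `M`. -/
theorem stmt_15 (n m1 m2 : ℕ) (δ M : ℝ) (hδ : 0 < δ) (hM : 0 < M)
    (C : Matrix (Fin n) (Fin n) ℝ)
    (B1 D1 : Matrix (Fin n) (Fin m1) ℝ) (B2 D2 : Matrix (Fin n) (Fin m2) ℝ)
    (R1 : Matrix (Fin m1) (Fin m1) ℝ) (R2 : Matrix (Fin m2) (Fin m2) ℝ)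
    (hR1symm : R1.IsSymm) (hR2symm : R2.IsSymm)
    (hR1 : (R1 - δ • (1 : Matrix (Fin m1) (Fin m1) ℝ)).PosSemidef)
    (hR2 : (R2 - δ • (1 : Matrix (Fin m2) (Fin m2) ℝ)).PosSemidef) :
    ∃ C₀ : ℝ, 0 < C₀ ∧ ∀ P1 P2 P1' P2' : Matrix (Fin n) (Fin n) ℝ,
      P1.PosSemidef → P2.PosSemidef → P1'.PosSemidef → P2'.PosSemidef →
      fnorm P1 ≤ M → fnorm P2 ≤ M → fnorm P1' ≤ M → fnorm P2' ≤ M →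
        fnorm (Theta1 C B1 D1 B2 D2 R1 R2 P1 P2 - Theta1 C B1 D1 B2 D2 R1 R2 P1' P2')
          ≤ C₀ * (fnorm (P1 - P1') + fnorm (P2 - P2')) := by
  classical
  set κ : ℝ≥0 := 2 + Real.toNNReal (Real.sqrt m1 / δ) + Real.toNNReal (Real.sqrt m2 / δ)
      + Real.toNNReal M + ‖B1‖₊ + ‖D1‖₊ + ‖B2‖₊ + ‖D2‖₊ + ‖C‖₊ with hκdef
  have hκ2 : 2 ≤ κ := by
    rw [hκdef]
    exact le_add_right (le_add_right (le_add_right (le_add_right (le_add_right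
      (le_add_right (le_add_right le_self_add))))))
  have hκ1 : 1 ≤ κ := le_trans (by norm_num) hκ2
  have hc1κ : Real.toNNReal (Real.sqrt m1 / δ) ≤ κ := by
    rw [hκdef]
    exact le_add_right (le_add_right (le_add_right (le_add_right (le_add_right
      (le_add_right (le_add_right le_add_self))))))
  have hc2κ : Real.toNNReal (Real.sqrt m2 / δ) ≤ κ := by
    rw [hκdef]
    exact le_add_right (le_add_right (le_add_right (le_add_right (le_add_right
      (le_add_right le_add_self)))))
  have hMκ : Real.toNNReal M ≤ κ := by
    rw [hκdef]
    exact le_add_right (le_add_right (le_add_right (le_add_right (le_add_right le_add_self))))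
  have hB1κ1 : ‖B1‖₊ ≤ κ ^ 1 := by
    rw [pow_one, hκdef]
    exact le_add_right (le_add_right (le_add_right (le_add_right le_add_self)))
  have hD1κ1 : ‖D1‖₊ ≤ κ ^ 1 := by
    rw [pow_one, hκdef]
    exact le_add_right (le_add_right (le_add_right le_add_self))
  have hB2κ1 : ‖B2‖₊ ≤ κ ^ 1 := by
    rw [pow_one, hκdef]
    exact le_add_right (le_add_right le_add_self)
  have hD2κ1 : ‖D2‖₊ ≤ κ ^ 1 := by
    rw [pow_one, hκdef]
    exact le_add_right le_add_self
  have hCκ1 : ‖C‖₊ ≤ κ ^ 1 := by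
    rw [pow_one, hκdef]; exact le_add_self
  have hD2tκ1 : ‖D2ᵀ‖₊ ≤ κ ^ 1 := by
    rw [Matrix.frobenius_nnnorm_transpose]; exact hD2κ1
  have hB2tκ1 : ‖B2ᵀ‖₊ ≤ κ ^ 1 := by
    rw [Matrix.frobenius_nnnorm_transpose]; exact hB2κ1
  clear_value κ
  -- PSD facts
  have hpsd2 : ∀ Q : Matrix (Fin n) (Fin n) ℝ, Q.PosSemidef →
      (R2 + D2ᵀ * Q * D2 - δ • 1).PosSemidef := by
    intro Q hQ
    have h' : (D2ᵀ * Q * D2).PosSemidef := by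
      have := hQ.conjTranspose_mul_mul_same D2
      rwa [Matrix.conjTranspose_eq_transpose_of_trivial] at this
    have heq : R2 + D2ᵀ * Q * D2 - δ • (1 : Matrix (Fin m2) (Fin m2) ℝ)
        = (R2 - δ • 1) + D2ᵀ * Q * D2 := by abel
    rw [heq]; exact hR2.add h'
  have hpsd1 : ∀ (Db : Matrix (Fin n) (Fin m1) ℝ) (Q : Matrix (Fin n) (Fin n) ℝ), Q.PosSemidef →
      (R1 + Dbᵀ * Q * Db - δ • 1).PosSemidef := by
    intro Db Q hQ
    have h' : (Dbᵀ * Q * Db).PosSemidef := by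
      have := hQ.conjTranspose_mul_mul_same Db
      rwa [Matrix.conjTranspose_eq_transpose_of_trivial] at this
    have heq : R1 + Dbᵀ * Q * Db - δ • (1 : Matrix (Fin m1) (Fin m1) ℝ)
        = (R1 - δ • 1) + Dbᵀ * Q * Db := by abel
    rw [heq]; exact hR1.add h'
  refine ⟨((κ ^ 36 : ℝ≥0) : ℝ), ?_, ?_⟩
  · exact_mod_cast pow_pos (lt_of_lt_of_le (by norm_num) hκ2) 36
  intro P1 P2 P1' P2' hP1 hP2 hP1' hP2' hn1 hn2 hn1' hn2'
  have toM : ∀ Q : Matrix (Fin n) (Fin n) ℝ, fnorm Q ≤ M → ‖Q‖₊ ≤ κ ^ 1 := by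
    intro Q hQ
    rw [pow_one]
    refine le_trans ?_ hMκ
    rw [← NNReal.coe_le_coe, coe_nnnorm, Real.coe_toNNReal M hM.le, ← fnorm_eq]
    exact hQ
  have hP1κ1 := toM P1 hn1
  have hP2κ1 := toM P2 hn2
  have hP1'κ1 := toM P1' hn1'
  have hP2'κ1 := toM P2' hn2'
  have f2 := inv_facts hδ (hpsd2 P2 hP2)
  have f2' := inv_facts hδ (hpsd2 P2' hP2')
  set A2 := R2 + D2ᵀ * P2 * D2 with hA2def
  set A2' := R2 + D2ᵀ * P2' * D2 with hA2'def
  set S := A2⁻¹ with hSdef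
  set S' := A2'⁻¹ with hS'def
  obtain ⟨hA2S, hSA2, hSn⟩ := f2
  obtain ⟨hA2S', hSA2', hSn'⟩ := f2'
  have hSκ1 : ‖S‖₊ ≤ κ ^ 1 := by rw [pow_one]; exact hSn.trans hc2κ
  have hS'κ1 : ‖S'‖₊ ≤ κ ^ 1 := by rw [pow_one]; exact hSn'.trans hc2κ
  clear_value S S' A2 A2'
  set e := ‖P1 - P1'‖₊ + ‖P2 - P2'‖₊ with hedef
  have he1 : ‖P1 - P1'‖₊ ≤ e := le_self_add
  have he2 : ‖P2 - P2'‖₊ ≤ e := le_add_self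
  have he2' : ‖P2' - P2‖₊ ≤ e := by rw [← neg_sub, nnnorm_neg]; exact he2
  clear_value e
  -- difference of inverses
  have hid1 : S - S' = S * (D2ᵀ * (P2' - P2) * D2) * S' := by
    have h2 : A2' - A2 = D2ᵀ * (P2' - P2) * D2 := by
      rw [hA2def, hA2'def]
      simp only [Matrix.mul_sub, Matrix.sub_mul]
      abel
    rw [← h2, Matrix.mul_sub, Matrix.sub_mul, Matrix.mul_assoc S A2' S', hA2S', mul_one,
      hSA2, one_mul]
  have hdS : ‖S - S'‖₊ ≤ κ ^ 4 * e := by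
    rw [hid1]
    exact le_trans (tri hSκ1 (tri hD2tκ1 he2' hD2κ1) hS'κ1) (le_of_eq (by ring))
  -- Db, Bb
  set Db := D1 - D2 * S * D2ᵀ * P2 * D1 with hDbdef
  set Db' := D1 - D2 * S' * D2ᵀ * P2' * D1 with hDb'def
  set Bb := B1 - B2 * S * D2ᵀ * P2 * D1 with hBbdef
  set Bb' := B1 - B2 * S' * D2ᵀ * P2' * D1 with hBb'def
  clear_value Db Db' Bb Bb'
  have hX : ‖D2 * S * D2ᵀ * P2 * D1‖₊ ≤ κ ^ 5 :=
    le_trans (quint hD2κ1 hSκ1 hD2tκ1 hP2κ1 hD1κ1) (le_of_eq (by ring))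
  have hX' : ‖D2 * S' * D2ᵀ * P2' * D1‖₊ ≤ κ ^ 5 :=
    le_trans (quint hD2κ1 hS'κ1 hD2tκ1 hP2'κ1 hD1κ1) (le_of_eq (by ring))
  have hXB : ‖B2 * S * D2ᵀ * P2 * D1‖₊ ≤ κ ^ 5 :=
    le_trans (quint hB2κ1 hSκ1 hD2tκ1 hP2κ1 hD1κ1) (le_of_eq (by ring))
  have hXB' : ‖B2 * S' * D2ᵀ * P2' * D1‖₊ ≤ κ ^ 5 :=
    le_trans (quint hB2κ1 hS'κ1 hD2tκ1 hP2'κ1 hD1κ1) (le_of_eq (by ring))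
  have hDbκ6 : ‖Db‖₊ ≤ κ ^ 6 := by
    rw [hDbdef]
    exact le_trans (nnnorm_sub_le _ _) (padd hκ2 (pbump hκ1 hD1κ1 (by norm_num)) hX)
  have hDb'κ6 : ‖Db'‖₊ ≤ κ ^ 6 := by
    rw [hDb'def]
    exact le_trans (nnnorm_sub_le _ _) (padd hκ2 (pbump hκ1 hD1κ1 (by norm_num)) hX')
  have hBbκ6 : ‖Bb‖₊ ≤ κ ^ 6 := by
    rw [hBbdef]
    exact le_trans (nnnorm_sub_le _ _) (padd hκ2 (pbump hκ1 hB1κ1 (by norm_num)) hXB)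
  have hBb'κ6 : ‖Bb'‖₊ ≤ κ ^ 6 := by
    rw [hBb'def]
    exact le_trans (nnnorm_sub_le _ _) (padd hκ2 (pbump hκ1 hB1κ1 (by norm_num)) hXB')
  have idDb : Db - Db' = -(D2 * (S - S') * D2ᵀ * P2 * D1 + D2 * S' * D2ᵀ * (P2 - P2') * D1) := by
    rw [hDbdef, hDb'def]
    simp only [Matrix.sub_mul, Matrix.mul_sub]
    abel
  have hdDb : ‖Db - Db'‖₊ ≤ κ ^ 9 * e := by
    rw [idDb, nnnorm_neg]
    refine le_trans (nnnorm_add_le _ _) (padde hκ2 ?_ ?_)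
    · exact le_trans (quint hD2κ1 hdS hD2tκ1 hP2κ1 hD1κ1) (le_of_eq (by ring))
    · refine pbumpe (a := 4) hκ1 (le_trans (quint hD2κ1 hS'κ1 hD2tκ1 he2 hD1κ1)
        (le_of_eq (by ring))) (by norm_num)
  have idBb : Bb - Bb' = -(B2 * (S - S') * D2ᵀ * P2 * D1 + B2 * S' * D2ᵀ * (P2 - P2') * D1) := by
    rw [hBbdef, hBb'def]
    simp only [Matrix.sub_mul, Matrix.mul_sub]
    abel
  have hdBb : ‖Bb - Bb'‖₊ ≤ κ ^ 9 * e := by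
    rw [idBb, nnnorm_neg]
    refine le_trans (nnnorm_add_le _ _) (padde hκ2 ?_ ?_)
    · exact le_trans (quint hB2κ1 hdS hD2tκ1 hP2κ1 hD1κ1) (le_of_eq (by ring))
    · refine pbumpe (a := 4) hκ1 (le_trans (quint hB2κ1 hS'κ1 hD2tκ1 he2 hD1κ1)
        (le_of_eq (by ring))) (by norm_num)
  -- W, K, G
  set W := B2ᵀ * P2 + D2ᵀ * P2 * C with hWdef
  set W' := B2ᵀ * P2' + D2ᵀ * P2' * C with hW'def
  set K := S * W with hKdef
  set K' := S' * W' with hK'def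
  set G := C - D2 * K with hGdef
  set G' := C - D2 * K' with hG'def
  clear_value W W' K K' G G'
  have hWκ4 : ‖W‖₊ ≤ κ ^ 4 := by
    rw [hWdef]
    refine le_trans (nnnorm_add_le _ _) (padd hκ2 ?_ ?_)
    · exact pbump (a := 2) hκ1 (le_trans (duo hB2tκ1 hP2κ1) (le_of_eq (by ring))) (by norm_num)
    · exact le_trans (tri hD2tκ1 hP2κ1 hCκ1) (le_of_eq (by ring))
  have hW'κ4 : ‖W'‖₊ ≤ κ ^ 4 := by
    rw [hW'def]
    refine le_trans (nnnorm_add_le _ _) (padd hκ2 ?_ ?_)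
    · exact pbump (a := 2) hκ1 (le_trans (duo hB2tκ1 hP2'κ1) (le_of_eq (by ring))) (by norm_num)
    · exact le_trans (tri hD2tκ1 hP2'κ1 hCκ1) (le_of_eq (by ring))
  have hKκ5 : ‖K‖₊ ≤ κ ^ 5 := by
    rw [hKdef]; exact le_trans (duo hSκ1 hWκ4) (le_of_eq (by ring))
  have hK'κ5 : ‖K'‖₊ ≤ κ ^ 5 := by
    rw [hK'def]; exact le_trans (duo hS'κ1 hW'κ4) (le_of_eq (by ring))
  have hGκ7 : ‖G‖₊ ≤ κ ^ 7 := by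
    rw [hGdef]
    refine le_trans (nnnorm_sub_le _ _) (padd hκ2 (pbump hκ1 hCκ1 (by norm_num)) ?_)
    exact le_trans (duo hD2κ1 hKκ5) (le_of_eq (by ring))
  have hG'κ7 : ‖G'‖₊ ≤ κ ^ 7 := by
    rw [hG'def]
    refine le_trans (nnnorm_sub_le _ _) (padd hκ2 (pbump hκ1 hCκ1 (by norm_num)) ?_)
    exact le_trans (duo hD2κ1 hK'κ5) (le_of_eq (by ring))
  have idW : W - W' = B2ᵀ * (P2 - P2') + D2ᵀ * (P2 - P2') * C := by
    rw [hWdef, hW'def]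
    simp only [Matrix.sub_mul, Matrix.mul_sub]
    abel
  have hdW : ‖W - W'‖₊ ≤ κ ^ 3 * e := by
    rw [idW]
    refine le_trans (nnnorm_add_le _ _) (padde hκ2 ?_ ?_)
    · exact pbumpe (a := 1) hκ1 (le_trans (duo hB2tκ1 he2) (le_of_eq (by ring))) (by norm_num)
    · exact le_trans (tri hD2tκ1 he2 hCκ1) (le_of_eq (by ring))
  have idK : K - K' = (S - S') * W + S' * (W - W') := by
    rw [hKdef, hK'def]
    simp only [Matrix.sub_mul, Matrix.mul_sub]
    abel
  have hdK : ‖K - K'‖₊ ≤ κ ^ 9 * e := by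
    rw [idK]
    refine le_trans (nnnorm_add_le _ _) (padde hκ2 ?_ ?_)
    · exact le_trans (duo hdS hWκ4) (le_of_eq (by ring))
    · exact pbumpe (a := 4) hκ1 (le_trans (duo hS'κ1 hdW) (le_of_eq (by ring))) (by norm_num)
  have idG : G - G' = -(D2 * (K - K')) := by
    rw [hGdef, hG'def]
    simp only [Matrix.mul_sub]
    abel
  have hdG : ‖G - G'‖₊ ≤ κ ^ 10 * e := by
    rw [idG, nnnorm_neg]
    exact le_trans (duo hD2κ1 hdK) (le_of_eq (by ring))
  -- A1, T
  have f1 := inv_facts hδ (hpsd1 Db P1 hP1)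
  have f1' := inv_facts hδ (hpsd1 Db' P1' hP1')
  set A1 := R1 + Dbᵀ * P1 * Db with hA1def
  set A1' := R1 + Db'ᵀ * P1' * Db' with hA1'def
  set T := A1⁻¹ with hTdef
  set T' := A1'⁻¹ with hT'def
  obtain ⟨hA1T, hTA1, hTn⟩ := f1
  obtain ⟨hA1T', hTA1', hTn'⟩ := f1'
  have hTκ1 : ‖T‖₊ ≤ κ ^ 1 := by rw [pow_one]; exact hTn.trans hc1κ
  have hT'κ1 : ‖T'‖₊ ≤ κ ^ 1 := by rw [pow_one]; exact hTn'.trans hc1κ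
  clear_value T T' A1 A1'
  have hDbTκ6 : ‖Dbᵀ‖₊ ≤ κ ^ 6 := by rw [Matrix.frobenius_nnnorm_transpose]; exact hDbκ6
  have hDb'Tκ6 : ‖Db'ᵀ‖₊ ≤ κ ^ 6 := by rw [Matrix.frobenius_nnnorm_transpose]; exact hDb'κ6
  have hBbTκ6 : ‖Bbᵀ‖₊ ≤ κ ^ 6 := by rw [Matrix.frobenius_nnnorm_transpose]; exact hBbκ6
  have hBb'Tκ6 : ‖Bb'ᵀ‖₊ ≤ κ ^ 6 := by rw [Matrix.frobenius_nnnorm_transpose]; exact hBb'κ6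
  have hdDbT : ‖(Db - Db')ᵀ‖₊ ≤ κ ^ 9 * e := by
    rw [Matrix.frobenius_nnnorm_transpose]; exact hdDb
  have hdBbT : ‖(Bb - Bb')ᵀ‖₊ ≤ κ ^ 9 * e := by
    rw [Matrix.frobenius_nnnorm_transpose]; exact hdBb
  have idA1 : A1 - A1' = (Db - Db')ᵀ * P1 * Db + Db'ᵀ * (P1 - P1') * Db
      + Db'ᵀ * P1' * (Db - Db') := by
    rw [hA1def, hA1'def]
    simp only [Matrix.transpose_sub, Matrix.sub_mul, Matrix.mul_sub]
    abel
  have hdA1 : ‖A1 - A1'‖₊ ≤ κ ^ 18 * e := by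
    rw [idA1]
    refine le_trans (nnnorm_add_le _ _) (padde hκ2 (le_trans (nnnorm_add_le _ _)
      (padde hκ2 ?_ ?_)) ?_)
    · exact le_trans (tri hdDbT hP1κ1 hDbκ6) (le_of_eq (by ring))
    · exact pbumpe (a := 12) hκ1 (le_trans (tri hDb'Tκ6 he1 hDbκ6) (le_of_eq (by ring))) (by norm_num)
    · exact pbumpe (a := 16) hκ1 (le_trans (tri hDb'Tκ6 hP1'κ1 hdDb) (le_of_eq (by ring))) (by norm_num)
  have hdA1' : ‖A1' - A1‖₊ ≤ κ ^ 18 * e := by rw [← neg_sub, nnnorm_neg]; exact hdA1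
  have idT : T - T' = T * (A1' - A1) * T' := by
    rw [Matrix.mul_sub, Matrix.sub_mul, Matrix.mul_assoc T A1' T', hA1T', mul_one,
      hTA1, one_mul]
  have hdT : ‖T - T'‖₊ ≤ κ ^ 20 * e := by
    rw [idT]
    exact le_trans (tri hTκ1 hdA1' hT'κ1) (le_of_eq (by ring))
  -- Y
  set Y := Bbᵀ * P1 + Dbᵀ * P1 * G with hYdef
  set Y' := Bb'ᵀ * P1' + Db'ᵀ * P1' * G' with hY'def
  clear_value Y Y'
  have hYκ15 : ‖Y‖₊ ≤ κ ^ 15 := by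
    rw [hYdef]
    refine le_trans (nnnorm_add_le _ _) (padd hκ2 ?_ ?_)
    · exact pbump (a := 7) hκ1 (le_trans (duo hBbTκ6 hP1κ1) (le_of_eq (by ring))) (by norm_num)
    · exact le_trans (tri hDbTκ6 hP1κ1 hGκ7) (le_of_eq (by ring))
  have idY : Y - Y' = ((Bb - Bb')ᵀ * P1 + Bb'ᵀ * (P1 - P1'))
      + ((Db - Db')ᵀ * P1 * G + Db'ᵀ * (P1 - P1') * G + Db'ᵀ * P1' * (G - G')) := by
    rw [hYdef, hY'def]
    simp only [Matrix.transpose_sub, Matrix.sub_mul, Matrix.mul_sub]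
    abel
  have hdY : ‖Y - Y'‖₊ ≤ κ ^ 21 * e := by
    rw [idY]
    refine le_trans (nnnorm_add_le _ _) ?_
    refine pbumpe (a := 20) hκ1 (padde (a := 19) hκ2 ?_ ?_) (by norm_num)
    · refine pbumpe (a := 11) hκ1 (le_trans (nnnorm_add_le _ _) (padde (a := 10) hκ2 ?_ ?_)) (by norm_num)
      · exact pbumpe (a := 10) hκ1 (le_trans (duo hdBbT hP1κ1) (le_of_eq (by ring))) (by norm_num)
      · exact pbumpe (a := 6) hκ1 (le_trans (duo hBb'Tκ6 he1) (le_of_eq (by ring))) (by norm_num)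
    · refine le_trans (nnnorm_add_le _ _) (padde hκ2 (le_trans (nnnorm_add_le _ _)
        (padde hκ2 ?_ ?_)) ?_)
      · exact le_trans (tri hdDbT hP1κ1 hGκ7) (le_of_eq (by ring))
      · exact pbumpe (a := 13) hκ1 (le_trans (tri hDb'Tκ6 he1 hGκ7) (le_of_eq (by ring))) (by norm_num)
      · exact pbumpe (a := 17) hκ1 (le_trans (tri hDb'Tκ6 hP1'κ1 hdG) (le_of_eq (by ring))) (by norm_num)
  -- Theta
  have hTh : Theta1 C B1 D1 B2 D2 R1 R2 P1 P2 = -(T * Y) := by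
    simp only [Theta1, Bbold, Dbold, Kmat, ← hA2def, ← hSdef, ← hWdef, ← hKdef, ← hGdef,
      ← hDbdef, ← hBbdef, ← hA1def, ← hTdef, ← hYdef]
  have hTh' : Theta1 C B1 D1 B2 D2 R1 R2 P1' P2' = -(T' * Y') := by
    simp only [Theta1, Bbold, Dbold, Kmat, ← hA2'def, ← hS'def, ← hW'def, ← hK'def, ← hG'def,
      ← hDb'def, ← hBb'def, ← hA1'def, ← hT'def, ← hY'def]
  have idTh : Theta1 C B1 D1 B2 D2 R1 R2 P1 P2 - Theta1 C B1 D1 B2 D2 R1 R2 P1' P2'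
      = -((T - T') * Y + T' * (Y - Y')) := by
    rw [hTh, hTh']
    simp only [Matrix.sub_mul, Matrix.mul_sub]
    abel
  have hmain : ‖Theta1 C B1 D1 B2 D2 R1 R2 P1 P2 - Theta1 C B1 D1 B2 D2 R1 R2 P1' P2'‖₊
      ≤ κ ^ 36 * e := by
    rw [idTh, nnnorm_neg]
    refine le_trans (nnnorm_add_le _ _) (padde hκ2 ?_ ?_)
    · exact le_trans (duo hdT hYκ15) (le_of_eq (by ring))
    · exact pbumpe (a := 22) hκ1 (le_trans (duo hT'κ1 hdY) (le_of_eq (by ring))) (by norm_num)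
  rw [hedef] at hmain
  rw [fnorm_eq_nnnorm, fnorm_eq_nnnorm, fnorm_eq_nnnorm]
  calc (‖Theta1 C B1 D1 B2 D2 R1 R2 P1 P2 - Theta1 C B1 D1 B2 D2 R1 R2 P1' P2'‖₊ : ℝ)
      ≤ ((κ ^ 36 * (‖P1 - P1'‖₊ + ‖P2 - P2'‖₊) : ℝ≥0) : ℝ) := NNReal.coe_le_coe.mpr hmain
    _ = (κ ^ 36 : ℝ≥0) * ((‖P1 - P1'‖₊ : ℝ) + (‖P2 - P2'‖₊ : ℝ)) := by push_cast; ring
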